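/- For all a, b > 0 with a ≠ b, √(A·X) < P < (A·X^{β})^{1/(1+β)} where β = log(π/2)/log(2e/π), A = (a+b)/2, P = (a-b)/(2·arcsin((a-b)/(a+b))), and X = A·e^{G/P-1} with G = √(ab). -/

import Mathlib

/-!
Put `t = arcsin ((a - b) / (a + b)) ∈ (0, π/2)` (for `b < a`; all four means are symmetric).
Then `P = A sin t / t`, `G = A cos t` and `X = A exp (t cot t - 1)`. With `L = log (π/2)` one has
`β / (1 + β) = L`, so the two bounds say `A^(1/2) X^(1/2) < P < A^(1-L) X^L`, i.e.
`(t cot t - 1) / 2 < log (sin t / t) < L (t cot t - 1)`.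

The left inequality is `sinh (log x) < log x` for `x = sin t / t < 1`, combined with
`t² (1 + cos t) < sin t (sin t + t)`. For the right one, `F t = L t cot t - log (sin t / t)`
tends to `L` at `0` and equals `L` at `π/2`; `F'` has the sign of
`W t = sin² t - (1 - L) t sin t cos t - L t²`, and `W t / t⁴` is strictly decreasing, so `F` first
increases and then decreases, and stays above `L` in between. The polynomial inequalities behind
these steps come from the Taylor bounds for `sin` and `cos` up to degree 7 and from
`0.45 < L < 0.4525`.
-/

open Real Set Filter Topology

noncomputable def A (a b : ℝ) : ℝ := (a + b) / 2
noncomputable def G (a b : ℝ) : ℝ := Real.sqrt (a * b)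
noncomputable def P (a b : ℝ) : ℝ := (a - b) / (2 * Real.arcsin ((a - b) / (a + b)))
noncomputable def X (a b : ℝ) : ℝ := A a b * Real.exp (G a b / P a b - 1)

lemma le_of_hasDerivAt_le {f g f' g' : ℝ → ℝ} (hf : ∀ x, HasDerivAt f (f' x) x)
    (hg : ∀ x, HasDerivAt g (g' x) x) (h₀ : f 0 ≤ g 0) (h' : ∀ x, 0 ≤ x → f' x ≤ g' x)
    {x : ℝ} (hx : 0 ≤ x) : f x ≤ g x := by
  have hmono : MonotoneOn (fun y ↦ g y - f y) (Ici 0) :=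
    monotoneOn_of_hasDerivWithinAt_nonneg (convex_Ici 0)
      (fun y _ ↦ ((hg y).sub (hf y)).continuousAt.continuousWithinAt)
      (fun y _ ↦ ((hg y).sub (hf y)).hasDerivWithinAt)
      (fun y hy ↦ sub_nonneg.2 (h' y (interior_subset hy)))
  linarith [hmono self_mem_Ici hx hx]

namespace Real

lemma cos_le_quartic {x : ℝ} (hx : 0 ≤ x) : cos x ≤ 1 - x ^ 2 / 2 + x ^ 4 / 24 :=
  le_of_hasDerivAt_le (g' := fun y ↦ -y + y ^ 3 / 6) hasDerivAt_cos
    (fun y ↦ by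
      refine ((((hasDerivAt_pow 2 y).div_const 2).const_sub 1).add
        ((hasDerivAt_pow 4 y).div_const 24)).congr_deriv ?_
      push_cast; ring)
    (by simp) (fun y hy ↦ by linarith [sin_ge_sub_cube hy]) hx

lemma sin_le_quintic {x : ℝ} (hx : 0 ≤ x) : sin x ≤ x - x ^ 3 / 6 + x ^ 5 / 120 :=
  le_of_hasDerivAt_le (g' := fun y ↦ 1 - y ^ 2 / 2 + y ^ 4 / 24) hasDerivAt_sin
    (fun y ↦ by
      refine (((hasDerivAt_id' y).sub ((hasDerivAt_pow 3 y).div_const 6)).add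
        ((hasDerivAt_pow 5 y).div_const 120)).congr_deriv ?_
      push_cast; ring)
    (by simp) (fun y hy ↦ cos_le_quartic hy) hx

lemma sextic_le_cos {x : ℝ} (hx : 0 ≤ x) : 1 - x ^ 2 / 2 + x ^ 4 / 24 - x ^ 6 / 720 ≤ cos x :=
  le_of_hasDerivAt_le (f' := fun y ↦ -y + y ^ 3 / 6 - y ^ 5 / 120)
    (fun y ↦ by
      refine ((((hasDerivAt_pow 2 y).div_const 2).const_sub 1).add
        ((hasDerivAt_pow 4 y).div_const 24)).sub
          ((hasDerivAt_pow 6 y).div_const 720) |>.congr_deriv ?_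
      push_cast; ring)
    hasDerivAt_cos (by simp) (fun y hy ↦ by linarith [sin_le_quintic hy]) hx

lemma septic_le_sin {x : ℝ} (hx : 0 ≤ x) :
    x - x ^ 3 / 6 + x ^ 5 / 120 - x ^ 7 / 5040 ≤ sin x :=
  le_of_hasDerivAt_le (f' := fun y ↦ 1 - y ^ 2 / 2 + y ^ 4 / 24 - y ^ 6 / 720)
    (fun y ↦ by
      refine ((((hasDerivAt_id' y).sub ((hasDerivAt_pow 3 y).div_const 6)).add
        ((hasDerivAt_pow 5 y).div_const 120)).sub
          ((hasDerivAt_pow 7 y).div_const 5040)).congr_deriv ?_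
      push_cast; ring)
    hasDerivAt_sin (by simp) (fun y hy ↦ sextic_le_cos hy) hx

lemma septic_sq_le_sin_sq {x : ℝ} (h₀ : 0 < x) (h₁ : x < π / 2) :
    (x - x ^ 3 / 6 + x ^ 5 / 120 - x ^ 7 / 5040) ^ 2 ≤ sin x ^ 2 := by
  have hx : x ≤ 1.5708 := by linarith [pi_lt_d6]
  have hnonneg : 0 ≤ x - x ^ 3 / 6 + x ^ 5 / 120 - x ^ 7 / 5040 := by
    nlinarith [pow_le_pow_left₀ h₀.le hx 2, sq_nonneg x, sq_nonneg (x ^ 2), sq_nonneg (x ^ 3)]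
  exact pow_le_pow_left₀ hnonneg (septic_le_sin h₀.le) 2

lemma log_pi_div_two_mem : log (π / 2) ∈ Ioo (9 / 20) (181 / 400) := by
  have hπ : 0 < π / 2 := by positivity
  constructor
  · have h : (1 - (9 / 20) / (256 : ℕ) : ℝ) ^ 256 ≤ exp (-(9 / 20)) :=
      one_sub_div_pow_le_exp_neg (by norm_num)
    rw [lt_log_iff_exp_lt hπ, ← inv_inv (exp _), ← exp_neg]
    calc (exp (-(9 / 20)))⁻¹ ≤ ((1 - (9 / 20) / (256 : ℕ) : ℝ) ^ 256)⁻¹ :=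
          inv_anti₀ (by positivity) h
      _ < π / 2 := by norm_num; linarith [pi_gt_d6]
  · have h : (1 - (-(181 / 400)) / (256 : ℕ) : ℝ) ^ 256 ≤ exp (-(-(181 / 400))) :=
      one_sub_div_pow_le_exp_neg (by norm_num)
    rw [log_lt_iff_lt_exp hπ, ← neg_neg (181 / 400 : ℝ)]
    exact lt_of_lt_of_le (by norm_num; linarith [pi_lt_d6]) h

lemma sq_mul_one_add_cos_lt {t : ℝ} (ht : 0 < t) (ht' : t < π / 2) :
    t ^ 2 * (1 + cos t) < sin t * (sin t + t) := by
  have hx : t ^ 2 ≤ 2.4675 := by nlinarith [pi_lt_d6]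
  -- `t⁶ R = S (S + t) - t² (2 - t² / 2 + t⁴ / 24)` with `S` the degree-7 Taylor polynomial of `sin`
  have hR : 0 < 1 / 90 - 17 * t ^ 2 / 5040 + 41 * t ^ 4 / 302400 - t ^ 6 / 302400
      + t ^ 8 / 25401600 := by
    nlinarith [sq_nonneg (t ^ 2), mul_nonneg (sq_nonneg t) (sub_nonneg.2 hx),
      sq_nonneg (t ^ 2 - 2.4675), mul_nonneg (sq_nonneg (t ^ 2)) (sub_nonneg.2 hx),
      sq_nonneg (t ^ 2 * (t ^ 2 - 2.4675))]
  nlinarith [mul_pos (pow_pos ht 6) hR, septic_sq_le_sin_sq ht ht',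
    mul_le_mul_of_nonneg_right (septic_le_sin ht.le) ht.le,
    mul_le_mul_of_nonneg_left (cos_le_quartic ht.le) (sq_nonneg t)]

lemma mul_cot_sub_one_div_two_lt_log_sin_div {t : ℝ} (ht : 0 < t) (ht' : t < π / 2) :
    (t * cos t / sin t - 1) / 2 < log (sin t / t) := by
  have hs : 0 < sin t := sin_pos_of_pos_of_lt_pi ht (by linarith [pi_pos])
  have hx : 0 < sin t / t := div_pos hs ht
  have hsinh : sinh (log (sin t / t)) < log (sin t / t) :=
    sinh_lt_self_iff.2 (log_neg hx ((div_lt_one ht).2 (sin_lt ht)))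
  rw [sinh_log hx] at hsinh
  have key : t * cos t / sin t - 1 < sin t / t - (sin t / t)⁻¹ := by
    rw [inv_div, div_sub_one hs.ne', div_sub_div _ _ ht.ne' hs.ne',
      div_lt_div_iff₀ hs (by positivity)]
    nlinarith [mul_lt_mul_of_pos_left (sq_mul_one_add_cos_lt ht ht') hs]
  linarith

end Real

namespace Sandor

noncomputable def F (l t : ℝ) : ℝ := log t - log (sin t) + l * (t * cos t / sin t)

noncomputable def W (l t : ℝ) : ℝ := sin t ^ 2 - (1 - l) * (t * sin t * cos t) - l * t ^ 2

-- `t⁵ · d/dt (W l t / t⁴)`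
noncomputable def E (l t : ℝ) : ℝ :=
  (5 - 3 * l) * (t * sin t * cos t) - (1 - l) * t ^ 2 * (cos t ^ 2 - sin t ^ 2) + 2 * l * t ^ 2
    - 4 * sin t ^ 2

lemma hasDerivAt_F (l : ℝ) {t : ℝ} (ht : 0 < t) (ht' : t < π) :
    HasDerivAt (F l) (W l t / (t * sin t ^ 2)) t := by
  have hs : sin t ≠ 0 := (sin_pos_of_pos_of_lt_pi ht ht').ne'
  have h := ((hasDerivAt_log ht.ne').sub ((hasDerivAt_log hs).comp t (hasDerivAt_sin t))).add
    ((((hasDerivAt_id' t).mul (hasDerivAt_cos t)).div (hasDerivAt_sin t) hs).const_mul l)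
  refine h.congr_deriv ?_
  have hpy := sin_sq_add_cos_sq t
  simp only [W, Pi.mul_apply]
  field_simp
  linear_combination (-(t ^ 2 * l)) * hpy

lemma hasDerivAt_W (l t : ℝ) : HasDerivAt (W l)
    ((1 + l) * (sin t * cos t) - (1 - l) * (t * (cos t ^ 2 - sin t ^ 2)) - 2 * l * t) t := by
  have h := (((hasDerivAt_sin t).pow 2).sub
    ((((hasDerivAt_id' t).mul (hasDerivAt_sin t)).mul (hasDerivAt_cos t)).const_mul (1 - l))).sub
    ((hasDerivAt_pow 2 t).const_mul l)
  refine h.congr_deriv ?_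
  simp only [Pi.mul_apply]
  push_cast; ring

lemma hasDerivAt_W_div_pow_four (l : ℝ) {t : ℝ} (ht : t ≠ 0) :
    HasDerivAt (fun s ↦ W l s / s ^ 4) (E l t / t ^ 5) t := by
  refine ((hasDerivAt_W l t).div (hasDerivAt_pow 4 t) (pow_ne_zero 4 ht)).congr_deriv ?_
  simp only [W, E]
  field_simp
  ring

lemma E_neg_of_eq {l t : ℝ} (hl : l = 9 / 20 ∨ l = 181 / 400) (ht : 0 < t) (ht' : t < π / 2) :
    E l t < 0 := by
  have hx : t ^ 2 ≤ 2.4675 := by nlinarith [pi_lt_d6]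
  have hs : 0 ≤ sin t := sin_nonneg_of_nonneg_of_le_pi ht.le (by linarith [pi_pos])
  have hc : 0 ≤ cos t := cos_nonneg_of_mem_Icc ⟨by linarith [pi_pos], ht'.le⟩
  have hsu := sin_le_quintic ht.le
  have hsc : t * (sin t * cos t)
      ≤ t * ((t - t ^ 3 / 6 + t ^ 5 / 120) * (1 - t ^ 2 / 2 + t ^ 4 / 24)) :=
    mul_le_mul_of_nonneg_left (mul_le_mul hsu (cos_le_quartic ht.le) hc (hs.trans hsu)) ht.le
  have hs2 : t ^ 2 * sin t ^ 2 ≤ t ^ 2 * (t - t ^ 3 / 6 + t ^ 5 / 120) ^ 2 :=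
    mul_le_mul_of_nonneg_left (pow_le_pow_left₀ hs hsu 2) (sq_nonneg t)
  have hs2' := septic_sq_le_sin_sq ht ht'
  have hpy : cos t ^ 2 = 1 - sin t ^ 2 := by linarith [sin_sq_add_cos_sq t]
  have ht6 := pow_pos ht 6
  have ht2 := sq_nonneg t
  simp only [E, hpy]
  -- with the Taylor bounds above, `E l t ≤ -t⁶ R`
  rcases hl with rfl | rfl
  · have hR : 0 < 13 / 225 - 53 * t ^ 2 / 2520 + 2819 * t ^ 4 / 1209600 - 271 * t ^ 6 / 3024000
        + t ^ 8 / 6350400 := by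
      nlinarith [mul_nonneg (sq_nonneg (t ^ 2)) (sub_nonneg.2 hx), pow_nonneg ht2 4]
    nlinarith [mul_pos ht6 hR]
  · have hR : 0 < 257 / 4500 - 117 * t ^ 2 / 5600 + 56107 * t ^ 4 / 24192000
        - 5399 * t ^ 6 / 60480000 + t ^ 8 / 6350400 := by
      nlinarith [mul_nonneg (sq_nonneg (t ^ 2)) (sub_nonneg.2 hx), pow_nonneg ht2 4]
    nlinarith [mul_pos ht6 hR]

lemma E_neg {l t : ℝ} (hl : l ∈ Icc (9 / 20) (181 / 400)) (ht : 0 < t) (ht' : t < π / 2) :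
    E l t < 0 := by
  have h₁ := E_neg_of_eq (.inl rfl) ht ht'
  have h₂ := E_neg_of_eq (.inr rfl) ht ht'
  have haff : E l t = 400 * ((181 / 400 - l) * E (9 / 20) t + (l - 9 / 20) * E (181 / 400) t) := by
    simp only [E]; ring
  have h₂' := mul_nonpos_of_nonneg_of_nonpos (sub_nonneg.2 hl.1) h₂.le
  rcases hl.2.lt_or_eq with hl₂ | rfl
  · nlinarith [mul_neg_of_pos_of_neg (sub_pos.2 hl₂) h₁]
  · exact h₂

lemma strictAntiOn_W_div_pow_four {l : ℝ} (hl : l ∈ Icc (9 / 20) (181 / 400)) :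
    StrictAntiOn (fun t ↦ W l t / t ^ 4) (Ioc 0 (π / 2)) := by
  refine strictAntiOn_of_hasDerivWithinAt_neg (convex_Ioc 0 (π / 2))
    (fun t ht ↦ (hasDerivAt_W_div_pow_four l ht.1.ne').continuousAt.continuousWithinAt)
    (fun t ht ↦ (hasDerivAt_W_div_pow_four l ?_).hasDerivWithinAt) (fun t ht ↦ ?_)
  · rw [interior_Ioc] at ht
    exact ht.1.ne'
  · rw [interior_Ioc] at ht
    exact div_neg_of_neg_of_pos (E_neg hl ht.1 ht.2) (pow_pos ht.1 5)

lemma tendsto_F_nhdsGT_zero (l : ℝ) : Tendsto (F l) (𝓝[>] 0) (𝓝 l) := by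
  have hsinc : Tendsto (fun t ↦ sin t / t) (𝓝[>] 0) (𝓝 1) := by
    have h : Tendsto sinc (𝓝[>] 0) (𝓝 1) := sinc_zero ▸ continuous_sinc.continuousWithinAt
    refine h.congr' ?_
    filter_upwards [self_mem_nhdsWithin] with t ht using sinc_of_ne_zero (ne_of_gt ht)
  have hcos : Tendsto cos (𝓝[>] 0) (𝓝 1) :=
    cos_zero ▸ continuous_cos.continuousWithinAt
  have h := ((continuousAt_log one_ne_zero).tendsto.comp hsinc).neg.add
    ((hcos.mul (hsinc.inv₀ one_ne_zero)).const_mul l)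
  simp only [log_one, neg_zero, inv_one, mul_one, zero_add] at h
  refine h.congr' ?_
  filter_upwards [Ioo_mem_nhdsGT (show (0 : ℝ) < π by positivity)] with t ht
  rw [Function.comp_apply, log_div (sin_pos_of_pos_of_lt_pi ht.1 ht.2).ne' ht.1.ne', F]
  field_simp
  ring

lemma F_pi_div_two (l : ℝ) : F l (π / 2) = log (π / 2) := by
  simp [F]

lemma lt_F {l t : ℝ} (hl : 9 / 20 ≤ l) (hlπ : l ≤ log (π / 2)) (ht : 0 < t) (ht' : t < π / 2) :
    l < F l t := by
  have hπ : π / 2 < π := by linarith [pi_pos]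
  have hF' : ∀ s ∈ Ioo 0 π, HasDerivAt (F l) (W l s / (s * sin s ^ 2)) s :=
    fun s hs ↦ hasDerivAt_F l hs.1 hs.2
  have hden : ∀ s ∈ Ioo 0 π, 0 < s * sin s ^ 2 :=
    fun s hs ↦ mul_pos hs.1 (pow_pos (sin_pos_of_pos_of_lt_pi hs.1 hs.2) 2)
  have hanti := strictAntiOn_W_div_pow_four ⟨hl, hlπ.trans log_pi_div_two_mem.2.le⟩
  have htI : t ∈ Ioc 0 (π / 2) := ⟨ht, ht'.le⟩
  rcases le_or_gt 0 (W l t / t ^ 4) with hW | hW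
  · have hmono : StrictMonoOn (F l) (Ioc 0 t) := by
      refine strictMonoOn_of_hasDerivWithinAt_pos (f' := fun s ↦ W l s / (s * sin s ^ 2))
        (convex_Ioc 0 t)
        (fun s hs ↦ (hF' s ⟨hs.1, by linarith [hs.2]⟩).continuousAt.continuousWithinAt)
        (fun s hs ↦ ?_) (fun s hs ↦ ?_) <;> rw [interior_Ioc] at hs
      · exact (hF' s ⟨hs.1, by linarith [hs.2]⟩).hasDerivWithinAt
      · have hWs : 0 < W l s / s ^ 4 := hW.trans_lt (hanti ⟨hs.1, by linarith [hs.2]⟩ htI hs.2)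
        exact div_pos ((div_pos_iff_of_pos_right (pow_pos hs.1 4)).1 hWs)
          (hden s ⟨hs.1, by linarith [hs.2]⟩)
    have hlim : l ≤ F l (t / 2) := by
      refine le_of_tendsto (tendsto_F_nhdsGT_zero l) ?_
      filter_upwards [Ioo_mem_nhdsGT (half_pos ht)] with s hs
      exact (hmono ⟨hs.1, by linarith [hs.2]⟩ ⟨half_pos ht, by linarith⟩ hs.2).le
    exact hlim.trans_lt (hmono ⟨half_pos ht, by linarith⟩ ⟨ht, le_rfl⟩ (by linarith))
  · have hanti' : StrictAntiOn (F l) (Icc t (π / 2)) := by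
      refine strictAntiOn_of_hasDerivWithinAt_neg (f' := fun s ↦ W l s / (s * sin s ^ 2))
        (convex_Icc t (π / 2))
        (fun s hs ↦
          (hF' s ⟨by linarith [hs.1], by linarith [hs.2]⟩).continuousAt.continuousWithinAt)
        (fun s hs ↦ ?_) (fun s hs ↦ ?_) <;> rw [interior_Icc] at hs
      · exact (hF' s ⟨by linarith [hs.1], by linarith [hs.2]⟩).hasDerivWithinAt
      · have hs0 : 0 < s := ht.trans hs.1
        have hWs : W l s / s ^ 4 < 0 := (hanti htI ⟨hs0, hs.2.le⟩ hs.1).trans hW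
        exact div_neg_of_neg_of_pos (neg_of_div_neg_left hWs (pow_pos hs0 4).le)
          (hden s ⟨hs0, by linarith [hs.2]⟩)
    calc l ≤ F l (π / 2) := (F_pi_div_two l).symm ▸ hlπ
      _ < F l t := hanti' ⟨le_rfl, ht'.le⟩ ⟨ht'.le, le_rfl⟩ ht'

lemma log_sin_div_lt_mul_mul_cot_sub_one {l t : ℝ} (hl : 9 / 20 ≤ l) (hlπ : l ≤ log (π / 2))
    (ht : 0 < t) (ht' : t < π / 2) : log (sin t / t) < l * (t * cos t / sin t - 1) := by
  have h := lt_F hl hlπ ht ht'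
  rw [F] at h
  rw [log_div (sin_pos_of_pos_of_lt_pi ht (by linarith [pi_pos])).ne' ht.ne']
  linarith

end Sandor

lemma A_comm (a b : ℝ) : A a b = A b a := by
  rw [A, A, add_comm]

lemma G_comm (a b : ℝ) : G a b = G b a := by
  rw [G, G, mul_comm]

lemma P_comm (a b : ℝ) : P a b = P b a := by
  rw [P, P, ← neg_sub b a, add_comm a b, neg_div (b + a) (b - a), arcsin_neg, mul_neg,
    neg_div_neg_eq]

lemma X_comm (a b : ℝ) : X a b = X b a := by
  rw [X, X, A_comm, G_comm, P_comm]

lemma exists_P_eq_and_X_eq {a b : ℝ} (hb : 0 < b) (hba : b < a) :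
    ∃ t, 0 < t ∧ t < π / 2 ∧ P a b = A a b * (sin t / t) ∧
      X a b = A a b * exp (t * cos t / sin t - 1) := by
  set x := (a - b) / (a + b) with hx
  have hab : 0 < a + b := by linarith
  have hx₀ : 0 < x := div_pos (by linarith) hab
  have hx₁ : x < 1 := (div_lt_one hab).2 (by linarith)
  have hA : 0 < A a b := by rw [A]; linarith
  have hs : sin (arcsin x) = x := sin_arcsin (by linarith) hx₁.le
  have hP : P a b = A a b * (sin (arcsin x) / arcsin x) := by
    rw [P, hs, hx, A]
    field_simp
  have hG : G a b = A a b * cos (arcsin x) := by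
    rw [cos_arcsin, ← sqrt_sq hA.le, ← sqrt_mul (sq_nonneg _), G, hx, A]
    congr 1
    field_simp
    ring
  refine ⟨arcsin x, arcsin_pos.2 hx₀, arcsin_lt_pi_div_two.2 hx₁, hP, ?_⟩
  rw [X, hG, hP, hs]
  congr 3
  field_simp

lemma sqrt_mul_mul_exp {c : ℝ} (hc : 0 ≤ c) (g : ℝ) : √(c * (c * exp g)) = c * exp (g / 2) := by
  rw [← mul_assoc, sqrt_mul (mul_self_nonneg c), sqrt_mul_self hc, exp_half]

lemma rpow_mul_mul_exp {c L : ℝ} (hc : 0 < c) (hL : L ≠ 1) (g : ℝ) :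
    (c * (c * exp g) ^ (L / (1 - L))) ^ (1 / (1 + L / (1 - L))) = c * exp (L * g) := by
  have hL' : 1 - L ≠ 0 := sub_ne_zero.2 hL.symm
  have h₁ : 1 + L / (1 - L) = 1 / (1 - L) := by field_simp; ring
  have h₂ : c * (c * exp g) ^ (L / (1 - L)) = c ^ (1 / (1 - L)) * exp (L / (1 - L) * g) := by
    rw [mul_rpow hc.le (exp_pos g).le, ← exp_mul, ← mul_assoc,
      ← rpow_one_add' hc.le (by rw [h₁]; exact one_div_ne_zero hL'), h₁, mul_comm g]
  rw [h₂, h₁, mul_rpow (by positivity) (exp_pos _).le, ← rpow_mul hc.le, ← exp_mul]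
  field_simp
  simp

lemma log_two_mul_exp_one_div_pi : log (2 * exp 1 / π) = 1 - log (π / 2) := by
  rw [log_div (by positivity) pi_ne_zero, log_mul two_ne_zero (exp_pos 1).ne', log_exp,
    log_div pi_ne_zero two_ne_zero]
  ring

theorem sandor_thm30 (a b : ℝ) (ha : 0 < a) (hb : 0 < b) (hab : a ≠ b) :
    Real.sqrt (A a b * X a b) < P a b ∧
    P a b < (A a b * X a b ^ (log (π/2) / log (2 * exp 1 / π))) ^
      (1 / (1 + log (π/2) / log (2 * exp 1 / π))) := by
  wlog hba : b < a generalizing a b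
  · rw [A_comm, X_comm, P_comm]
    exact this b a hb ha hab.symm ((not_lt.1 hba).lt_of_ne hab)
  obtain ⟨t, ht, ht', hP, hX⟩ := exists_P_eq_and_X_eq hb hba
  have hA : 0 < A a b := by rw [A]; linarith
  have hsinc : 0 < sin t / t := div_pos (sin_pos_of_pos_of_lt_pi ht (by linarith [pi_pos])) ht
  have hL := log_pi_div_two_mem
  rw [log_two_mul_exp_one_div_pi, hP, hX, sqrt_mul_mul_exp hA.le,
    rpow_mul_mul_exp hA (by linarith [hL.2])]
  refine ⟨mul_lt_mul_of_pos_left ?_ hA, mul_lt_mul_of_pos_left ?_ hA⟩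
  · exact (lt_log_iff_exp_lt hsinc).1 (mul_cot_sub_one_div_two_lt_log_sin_div ht ht')
  · exact (log_lt_iff_lt_exp hsinc).1
      (Sandor.log_sin_div_lt_mul_mul_cot_sub_one hL.1.le le_rfl ht ht')
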